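/- For every integer k ≥ 8, there exists a coalition partition Ψ of the path P_k with four parts such that the coalition graph CG(P_k, Ψ) is isomorphic to 2K_2 (two disjoint edges). -/

import Mathlib

open SimpleGraph

attribute [local instance] Classical.propDecidable

def Dominates {V : Type*} (G : SimpleGraph V) (S : Set V) : Prop :=
  ∀ v, v ∉ S → ∃ u ∈ S, G.Adj u v

def Coalition {V : Type*} (G : SimpleGraph V) (A B : Set V) : Prop :=
  Disjoint A B ∧ ¬ Dominates G A ∧ ¬ Dominates G B ∧ Dominates G (A ∪ B)

def IsCoalitionPartition {V : Type*} (G : SimpleGraph V) (P : Finset (Set V)) : Prop :=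
  (∀ A ∈ P, A.Nonempty) ∧
  (∀ A ∈ P, ∀ B ∈ P, A ≠ B → Disjoint A B) ∧
  (∀ v : V, ∃ A ∈ P, v ∈ A) ∧
  (∀ A ∈ P, (Dominates G A ∧ ∃ v, A = {v}) ∨
    (¬ Dominates G A ∧ ∃ B ∈ P, B ≠ A ∧ Coalition G A B))

noncomputable def coalitionNumber {V : Type*} (G : SimpleGraph V) : ℕ :=
  sSup {n | ∃ P : Finset (Set V), IsCoalitionPartition G P ∧ P.card = n}

def coalitionGraph {V : Type*} (G : SimpleGraph V) (P : Finset (Set V)) :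
    SimpleGraph {A : Set V // A ∈ P} where
  Adj A B := Coalition G A.1 B.1
  symm := by
    constructor
    rintro A B ⟨d, na, nb, u⟩
    exact ⟨d.symm, nb, na, by rwa [Set.union_comm]⟩
  loopless := by
    constructor
    rintro ⟨A, hA⟩ ⟨d, na, nb, u⟩
    rw [Set.union_self] at u
    exact na u

/-- `2K_2`: two disjoint edges on four vertices. -/
def twoK2 : SimpleGraph (Fin 4) :=
  SimpleGraph.fromEdgeSet {s(0, 1), s(2, 3)}

/-!
Colour the vertices `0, …, k - 1` of the path by `0 2 2 1 1 3 0 3 1 3 1 3 …` and take the four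
colour classes as the parts. From vertex 7 on the colours 3 and 1 alternate, so the union of the
classes 0 and 1, and that of the classes 2 and 3, each contain `n` or `n - 1` for every `n ≥ 8`;
with a check of the first eight vertices, both unions dominate. Any other union of two classes
misses the closed neighbourhood of one of the vertices 0, 2, 4, 6, so no class dominates on its
own and the coalitions are exactly the two edges `{0, 1}`, `{2, 3}` of `2K_2`.
-/

namespace Dominates

variable {V : Type*} {G : SimpleGraph V} {S T : Set V}

lemma mono (hST : S ⊆ T) (hS : Dominates G S) : Dominates G T := fun v hv ↦
  (hS v fun h ↦ hv (hST h)).imp fun _ ⟨hu, hadj⟩ ↦ ⟨hST hu, hadj⟩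

end Dominates

section Fibres

variable {V ι : Type*} {f : V → ι} {G : SimpleGraph V}

lemma preimage_singleton_injective (hf : Function.Surjective f) :
    Function.Injective fun i : ι ↦ f ⁻¹' {i} := by
  intro i j hij
  obtain ⟨v, rfl⟩ := hf i
  exact (Set.ext_iff.mp hij v).mp rfl

lemma coalition_preimage_singleton_iff (hnd : ∀ i, ¬ Dominates G (f ⁻¹' {i})) {i j : ι}
    (hij : i ≠ j) : Coalition G (f ⁻¹' {i}) (f ⁻¹' {j}) ↔ Dominates G (f ⁻¹' {i, j}) :=
  ⟨fun h ↦ h.2.2.2, fun h ↦ ⟨(Set.disjoint_singleton.mpr hij).preimage f, hnd i, hnd j, h⟩⟩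

variable [Fintype ι]

noncomputable def fibres (f : V → ι) : Finset (Set V) :=
  Finset.univ.image fun i ↦ f ⁻¹' {i}

lemma card_fibres (hf : Function.Surjective f) : (fibres f).card = Fintype.card ι :=
  Finset.card_image_of_injective _ (preimage_singleton_injective hf)

noncomputable def fibresEquiv (hf : Function.Surjective f) : ι ≃ {A // A ∈ fibres f} :=
  Equiv.ofBijective (fun i ↦ ⟨f ⁻¹' {i}, Finset.mem_image_of_mem _ (Finset.mem_univ i)⟩)
    ⟨fun _ _ h ↦ preimage_singleton_injective hf (congrArg Subtype.val h), by
      rintro ⟨A, hA⟩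
      obtain ⟨i, -, rfl⟩ := Finset.mem_image.mp hA
      exact ⟨i, rfl⟩⟩

lemma isCoalitionPartition_fibres (hf : Function.Surjective f)
    (hnd : ∀ i, ¬ Dominates G (f ⁻¹' {i}))
    (hpartner : ∀ i, ∃ j ≠ i, Dominates G (f ⁻¹' {i, j})) :
    IsCoalitionPartition G (fibres f) := by
  simp only [IsCoalitionPartition, fibres, Finset.mem_image, Finset.mem_univ, true_and,
    forall_exists_index, forall_apply_eq_imp_iff]
  refine ⟨fun i ↦ hf i, fun i j hij ↦ ?_, fun v ↦ ⟨_, ⟨f v, rfl⟩, rfl⟩, fun i ↦ Or.inr ⟨hnd i, ?_⟩⟩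
  · exact (Set.disjoint_singleton.mpr fun h : i = j ↦ hij (h ▸ rfl)).preimage f
  · obtain ⟨j, hji, hdom⟩ := hpartner i
    exact ⟨_, ⟨j, rfl⟩, fun h ↦ hji (preimage_singleton_injective hf h),
      (coalition_preimage_singleton_iff hnd hji.symm).mpr hdom⟩

variable {H : SimpleGraph ι}

noncomputable def coalitionGraphFibresIso (hf : Function.Surjective f)
    (hnd : ∀ i, ¬ Dominates G (f ⁻¹' {i}))
    (hadj : ∀ i j, i ≠ j → (Dominates G (f ⁻¹' {i, j}) ↔ H.Adj i j)) :
    coalitionGraph G (fibres f) ≃g H :=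
  RelIso.symm ⟨fibresEquiv hf, fun {i j} ↦ by
    rcases eq_or_ne i j with rfl | hij
    · exact iff_of_false ((coalitionGraph G _).loopless.irrefl _) (H.loopless.irrefl i)
    · exact (coalition_preimage_singleton_iff hnd hij).trans (hadj i j hij)⟩

theorem exists_coalitionPartition_iso_of_colouring (hf : Function.Surjective f)
    (hnd : ∀ i, ¬ Dominates G (f ⁻¹' {i}))
    (hadj : ∀ i j, i ≠ j → (Dominates G (f ⁻¹' {i, j}) ↔ H.Adj i j))
    (hH : ∀ i, ∃ j, H.Adj i j) :
    ∃ P, IsCoalitionPartition G P ∧ P.card = Fintype.card ι ∧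
      Nonempty (coalitionGraph G P ≃g H) := by
  refine ⟨fibres f, isCoalitionPartition_fibres hf hnd fun i ↦ ?_, card_fibres hf,
    ⟨coalitionGraphFibresIso hf hnd hadj⟩⟩
  obtain ⟨j, hj⟩ := hH i
  exact ⟨j, hj.ne.symm, (hadj i j hj.ne).mpr hj⟩

end Fibres

section Path

variable {k : ℕ} {s : Set ℕ}

lemma dominates_pathGraph_of_head_tail (N : ℕ) (hN : N ≤ k)
    (head : ∀ n < N, ∃ m < N, m ∈ s ∧ m ≤ n + 1 ∧ n ≤ m + 1)
    (tail : ∀ n ≥ N, n ∈ s ∨ n - 1 ∈ s) :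
    Dominates (pathGraph k) (Fin.val ⁻¹' s) := by
  intro v hv
  obtain ⟨m, hmk, hm, hmv, hvm⟩ : ∃ m < k, m ∈ s ∧ m ≤ v + 1 ∧ v.val ≤ m + 1 := by
    rcases lt_or_ge v.val N with hvN | hvN
    · obtain ⟨m, hmN, hm⟩ := head v hvN
      exact ⟨m, by omega, hm⟩
    · rcases tail v hvN with hm | hm
      exacts [⟨v, v.isLt, hm, by omega, by omega⟩, ⟨v - 1, by omega, hm, by omega, by omega⟩]
  have hmv_ne : m ≠ v := by rintro rfl; exact hv hm
  exact ⟨⟨m, hmk⟩, hm, pathGraph_adj.mpr (by simp only; omega)⟩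

lemma not_dominates_pathGraph_of_forall_notMem {n : ℕ} (hn : n < k)
    (h : ∀ m ≤ n + 1, n ≤ m + 1 → m ∉ s) : ¬ Dominates (pathGraph k) (Fin.val ⁻¹' s) := by
  intro hd
  obtain ⟨u, hu, hadj⟩ := hd ⟨n, hn⟩ (h n (by omega) (by omega))
  simp only [pathGraph_adj] at hadj
  exact h u (by omega) (by omega) hu

end Path

def pathColour : ℕ → Fin 4
  | 0 | 6 => 0
  | 3 | 4 => 1
  | 1 | 2 => 2
  | 5 => 3
  | n + 7 => if n % 2 = 0 then 3 else 1

lemma pathColour_tail {n : ℕ} (hn : 8 ≤ n) :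
    pathColour n = 1 ∧ pathColour (n - 1) = 3 ∨ pathColour n = 3 ∧ pathColour (n - 1) = 1 := by
  obtain ⟨m, rfl⟩ := Nat.exists_eq_add_of_le' hn
  simp only [show m + 8 = (m + 1) + 7 by omega, show m + 1 + 7 - 1 = m + 7 by omega, pathColour]
  split_ifs <;> omega

lemma dominates_pathColour_iff {k : ℕ} (hk : 8 ≤ k) {i j : Fin 4} (hij : i ≠ j) :
    Dominates (pathGraph k) (pathColour ∘ Fin.val ⁻¹' {i, j}) ↔ i.val / 2 = j.val / 2 := by
  simp only [Set.preimage_comp]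
  constructor
  · contrapose
    intro hdiv
    obtain ⟨n, hn, h⟩ : ∃ n < 7, ∀ m ≤ n + 1, n ≤ m + 1 → pathColour m ≠ i ∧ pathColour m ≠ j := by
      revert i j; decide
    exact not_dominates_pathGraph_of_forall_notMem (n := n) (by omega) fun m hm hm' ↦ by
      simpa using h m hm hm'
  · intro hdiv
    refine dominates_pathGraph_of_head_tail 8 hk ?_ fun n hn ↦ ?_
    · simp only [Set.mem_preimage, Set.mem_insert_iff, Set.mem_singleton_iff]
      revert i j; decide
    · simp only [Set.mem_preimage, Set.mem_insert_iff, Set.mem_singleton_iff]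
      have hodd : i = 1 ∨ i = 3 ∨ j = 1 ∨ j = 3 := by revert i j; decide
      rcases pathColour_tail hn with ⟨h1, h3⟩ | ⟨h3, h1⟩ <;> rw [h1, h3] <;> tauto

lemma twoK2_adj_iff {i j : Fin 4} : twoK2.Adj i j ↔ i ≠ j ∧ i.val / 2 = j.val / 2 := by
  fin_cases i <;> fin_cases j <;> simp [twoK2]

theorem stmt16 (k : ℕ) (hk : 8 ≤ k) :
    ∃ P : Finset (Set (Fin k)),
      IsCoalitionPartition (SimpleGraph.pathGraph k) P ∧ P.card = 4 ∧
      Nonempty ((coalitionGraph (SimpleGraph.pathGraph k) P) ≃g twoK2) := by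
  have hf : Function.Surjective (pathColour ∘ Fin.val : Fin k → Fin 4) := fun i ↦ by
    obtain ⟨n, hn, rfl⟩ : ∃ n < 8, pathColour n = i := by revert i; decide
    exact ⟨⟨n, by omega⟩, rfl⟩
  have hadj (i j : Fin 4) (hij : i ≠ j) :
      Dominates (pathGraph k) (pathColour ∘ Fin.val ⁻¹' {i, j}) ↔ twoK2.Adj i j := by
    rw [dominates_pathColour_iff hk hij, twoK2_adj_iff, and_iff_right hij]
  have hnd (i : Fin 4) : ¬ Dominates (pathGraph k) (pathColour ∘ Fin.val ⁻¹' {i}) := by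
    have hne : i ≠ i + 2 ∧ i.val / 2 ≠ (i + 2).val / 2 := by revert i; decide
    intro h
    exact hne.2 <| (dominates_pathColour_iff hk hne.1).mp <|
      Dominates.mono (Set.preimage_mono (Set.singleton_subset_iff.mpr (Set.mem_insert _ _))) h
  have hH (i : Fin 4) : ∃ j, twoK2.Adj i j := by
    simp only [twoK2_adj_iff]; revert i; decide
  simpa using exists_coalitionPartition_iso_of_colouring hf hnd hadj hH
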